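/- arXiv:2301.02220 — 2 statements merged into one kernel-verified Lean document; each statement's English description precedes it below -/
import Mathlib

section
/- First-order/second-order decomposition of the value difference: for any two policies π_new and π_old, (1−γ)(V(π_new) − V(π_old)) = η₁(π_new, π_old) + η₂(π_new, π_old); moreover η₁(π_new, π_old) = Σ_{a∈A, s∈S} (π_new(a|s) − π_old(a|s)) A^{π_old}(a,s) d^{π_old,ν}(s). -/
/-!
Both value functions solve Bellman equations, `V^π = g_π + γ P_π V^π` with `P_π` the
state-to-state transition matrix and `g_π` the expected one-step reward of `π`. Subtracting
them, `D = V^{π_new} - V^{π_old}` solves `D = Δ + γ P_{π_new} D` with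
`Δ(s) = Σ_a π_new(a|s) A^{π_old}(a,s)`. As `γ P_{π_new}` is a contraction in the sup norm,
`D = Σ_t γᵗ P_{π_new}ᵗ Δ`, and pairing with `ν` turns this series into
`Σ_s d^{π_new,ν}(s) Δ(s) / (1 - γ)`. Expanding `η₁ + η₂` gives the same sum, since
`Σ_a π_old(a|s) A^{π_old}(a,s) = 0` cancels the cross terms; that identity also gives the
second formula for `η₁`.
-/

namespace VEPO

variable {S A : Type} [Fintype S] [Fintype A] [DecidableEq S] [DecidableEq A]

/-- A probability mass function on a finite type, represented as a real-valued function. -/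
def IsPMF {X : Type} [Fintype X] (f : X → ℝ) : Prop :=
  (∀ x, 0 ≤ f x) ∧ ∑ x : X, f x = 1

/-- A transition kernel: for each action-state pair `(a, s)`, a pmf `p a s` on next states. -/
def IsKernel (p : A → S → S → ℝ) : Prop := ∀ a s, IsPMF (p a s)

/-- A policy: for each state `s`, a pmf `π s` on actions. -/
def IsPolicy (π : S → A → ℝ) : Prop := ∀ s, IsPMF (π s)

/-- The `t`-step visitation probability `p_t^π(s' | a, s)`. -/
def visit (p : A → S → S → ℝ) (π : S → A → ℝ) : ℕ → A → S → S → ℝ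
  | 0, _, s, s' => if s' = s then 1 else 0
  | 1, a, s, s' => p a s s'
  | (t + 2), a, s, s' =>
      ∑ s'' : S, visit p π (t + 1) a s s'' * ∑ a'' : A, π s'' a'' * p a'' s'' s'

/-- The Q-function `Q^π(a, s)`. -/
noncomputable def Qfun (p : A → S → S → ℝ) (r : S → A → ℝ) (γ : ℝ)
    (π : S → A → ℝ) (a : A) (s : S) : ℝ :=
  r s a + ∑' t : ℕ, γ ^ (t + 1) *
    ∑ s' : S, visit p π (t + 1) a s s' * ∑ a' : A, π s' a' * r s' a'

/-- The value function `V^π(s)`. -/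
noncomputable def Vfun (p : A → S → S → ℝ) (r : S → A → ℝ) (γ : ℝ)
    (π : S → A → ℝ) (s : S) : ℝ :=
  ∑ a : A, π s a * Qfun p r γ π a s

/-- The advantage function `A^π(a, s)`. -/
noncomputable def Adv (p : A → S → S → ℝ) (r : S → A → ℝ) (γ : ℝ)
    (π : S → A → ℝ) (a : A) (s : S) : ℝ :=
  Qfun p r γ π a s - Vfun p r γ π s

/-- The conditional discounted visitation probability `d^π(s' | a, s)`. -/
noncomputable def dvisit (p : A → S → S → ℝ) (γ : ℝ) (π : S → A → ℝ)
    (s' : S) (a : A) (s : S) : ℝ :=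
  (1 - γ) * ∑' t : ℕ, γ ^ t * visit p π t a s s'

/-- The integrated discounted visitation probability `d^{π,ν}(s')`. -/
noncomputable def dnu (p : A → S → S → ℝ) (γ : ℝ) (ν : S → ℝ)
    (π : S → A → ℝ) (s' : S) : ℝ :=
  ∑ s : S, ∑ a : A, π s a * ν s * dvisit p γ π s' a s

/-- The integrated value `V(π) = Σ_s ν(s) V^π(s)`. -/
noncomputable def IntV (p : A → S → S → ℝ) (r : S → A → ℝ) (γ : ℝ) (ν : S → ℝ)
    (π : S → A → ℝ) : ℝ :=
  ∑ s : S, ν s * Vfun p r γ π s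

/-- The first-order term `η₁(π₁, π₂)`. -/
noncomputable def eta1 (p : A → S → S → ℝ) (r : S → A → ℝ) (γ : ℝ) (ν : S → ℝ)
    (π₁ π₂ : S → A → ℝ) : ℝ :=
  ∑ a : A, ∑ s : S, π₁ s a * Adv p r γ π₂ a s * dnu p γ ν π₂ s

/-- The higher-order remainder `η₂(π₁, π₂)`. -/
noncomputable def eta2 (p : A → S → S → ℝ) (r : S → A → ℝ) (γ : ℝ) (ν : S → ℝ)
    (π₁ π₂ : S → A → ℝ) : ℝ :=
  ∑ a : A, ∑ s : S, (π₁ s a - π₂ s a) * Adv p r γ π₂ a s *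
    (dnu p γ ν π₁ s - dnu p γ ν π₂ s)

/-- Total variation distance between two pmfs on a finite type. -/
noncomputable def DTV {X : Type} [Fintype X] (μ₁ μ₂ : X → ℝ) : ℝ :=
  (1 / 2) * ∑ x : X, |μ₁ x - μ₂ x|

/-- Kullback–Leibler divergence between two pmfs on a finite type, valued in `EReal`
(equal to `⊤` if `μ₁` is not absolutely continuous w.r.t. `μ₂`). -/
noncomputable def DKL {X : Type} [Fintype X] (μ₁ μ₂ : X → ℝ) : EReal :=
  ∑ x : X, (if μ₁ x = 0 then (0 : EReal)
    else if μ₂ x = 0 then (⊤ : EReal)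
    else ((μ₁ x * Real.log (μ₁ x / μ₂ x) : ℝ) : EReal))

/-- Conditional discounted stationary probability ratio `ω^π(a', s'; a, s)`. -/
noncomputable def ratio (p : A → S → S → ℝ) (γ : ℝ) (pinf : A → S → ℝ)
    (π : S → A → ℝ) (a' : A) (s' : S) (a : A) (s : S) : ℝ :=
  (1 - γ) * ((if a' = a ∧ s' = s then 1 else 0) +
    ∑' t : ℕ, γ ^ (t + 1) * (π s' a' * visit p π (t + 1) a s s')) / pinf a' s'

/-- Integrated discounted stationary probability ratio `ω^{π,ν}(a', s')`. -/
noncomputable def rationu (p : A → S → S → ℝ) (γ : ℝ) (pinf : A → S → ℝ) (ν : S → ℝ)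
    (π : S → A → ℝ) (a' : A) (s' : S) : ℝ :=
  ∑ a : A, ∑ s : S, π s a * ν s * ratio p γ pinf π a' s' a s

/-- Marginal state distribution `p̄_t^{π,ν}` at time `t` when `S₀ ~ ν` and actions follow `π`. -/
def marg (p : A → S → S → ℝ) (π : S → A → ℝ) (ν : S → ℝ) : ℕ → S → ℝ
  | 0, s' => ν s'
  | (t + 1), s' => ∑ s : S, marg p π ν t s * ∑ a : A, π s a * p a s s'

/-- Conditional discounted state–action visitation `q^π(a', s'; a, s)`. -/
noncomputable def qvisit (p : A → S → S → ℝ) (γ : ℝ) (π : S → A → ℝ)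
    (a' : A) (s' : S) (a : A) (s : S) : ℝ :=
  (1 - γ) * ((if a' = a ∧ s' = s then 1 else 0) +
    ∑' t : ℕ, γ ^ (t + 1) * (π s' a' * visit p π (t + 1) a s s'))

/-- The estimating function `ψ(o) = ψ₁ + ψ₂(o) + ψ₃(o)` evaluated at a data tuple
`o = (s, a, rr, s')`, for nuisance functions `Ṽ = Vt`, `Ã = At`, `ω̃ = ωt`
(with `ωt a' s' a s = ω̃(a',s'; a,s)`) and `d̃ = dt` (with `dt s* a s = d̃(s* | a, s)`). -/
noncomputable def psi (γ : ℝ) (ν : S → ℝ) (π πold : S → A → ℝ)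
    (Vt : S → ℝ) (At : A → S → ℝ) (ωt : A → S → A → S → ℝ) (dt : S → A → S → ℝ)
    (s : S) (a : A) (rr : ℝ) (s' : S) : ℝ :=
  let dtnu : S → ℝ := fun sstar => ∑ a0 : A, ∑ s0 : S, πold s0 a0 * ν s0 * dt sstar a0 s0
  let ωtnu : A → S → ℝ := fun a1 s1 => ∑ a0 : A, ∑ s0 : S, πold s0 a0 * ν s0 * ωt a1 s1 a0 s0
  (∑ sstar : S, dtnu sstar * ∑ astar : A, π sstar astar * At astar sstar)
  + (1 / (1 - γ)) * ∑ sstar : S, dtnu sstar * ∑ astar : A,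
      (π sstar astar - πold sstar astar) * ωt a s astar sstar *
        (rr + γ * Vt s' - Vt s - At a s)
  + (ωtnu a s / (1 - γ)) * ∑ astar : A,
      (γ * ∑ a' : A, πold s' a' * ∑ sstar : S, dt sstar a' s' * π sstar astar * At astar sstar
       - ∑ sstar : S, dt sstar a s * π sstar astar * At astar sstar
       + (1 - γ) * π s astar * At astar s)

/-- The expectation `E[ψ(O)]` of the estimating function, where `(A₀, S₀) ~ p_∞`,
`S₁ | (A₀, S₀) ~ p(· | A₀, S₀)` and `E[R₀ | A₀, S₀] = r(S₀, A₀)`;  since `ψ` is affine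
in its reward argument with a coefficient not depending on `s'`, this finite sum is
exactly the expectation of `ψ(O)`. -/
noncomputable def Epsi (p : A → S → S → ℝ) (r : S → A → ℝ) (γ : ℝ) (ν : S → ℝ)
    (pinf : A → S → ℝ) (π πold : S → A → ℝ)
    (Vt : S → ℝ) (At : A → S → ℝ) (ωt : A → S → A → S → ℝ) (dt : S → A → S → ℝ) : ℝ :=
  ∑ a : A, ∑ s : S, pinf a s * ∑ s' : S, p a s s' *
    psi γ ν π πold Vt At ωt dt s a (r s a) s'

open Matrix Finset

section DiscountedSum

variable {n : Type*} [Fintype n]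

theorem abs_sum_mul_le_of_sum_eq_one {w f : n → ℝ} {C : ℝ} (hw0 : ∀ i, 0 ≤ w i)
    (hw1 : ∑ i, w i = 1) (hf : ∀ i, |f i| ≤ C) : |∑ i, w i * f i| ≤ C :=
  calc |∑ i, w i * f i| ≤ ∑ i, w i * |f i| := by
        simpa only [abs_mul, abs_of_nonneg (hw0 _)] using
          abs_sum_le_sum_abs (fun i => w i * f i) univ
    _ ≤ ∑ i, w i * C := sum_le_sum fun i _ => mul_le_mul_of_nonneg_left (hf i) (hw0 i)
    _ = C := by rw [← sum_mul, hw1, one_mul]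

theorem _root_.HasSum.dotProduct_left {ι : Type*} {f : ι → n → ℝ} {x : n → ℝ} (v : n → ℝ)
    (h : HasSum f x) :
    HasSum (fun t => v ⬝ᵥ f t) (v ⬝ᵥ x) :=
  hasSum_sum fun i _ => (Pi.hasSum.1 h i).mul_left (v i)

theorem _root_.HasSum.matrix_mulVec {ι m : Type*} {f : ι → n → ℝ} {x : n → ℝ}
    (M : Matrix m n ℝ) (h : HasSum f x) : HasSum (fun t => M *ᵥ f t) (M *ᵥ x) :=
  Pi.hasSum.2 fun i => h.dotProduct_left (M i)

variable [DecidableEq n] {P : Matrix n n ℝ} {γ : ℝ}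

theorem norm_mulVec_le_of_mem_rowStochastic (hP : P ∈ rowStochastic ℝ n) (f : n → ℝ) :
    ‖P *ᵥ f‖ ≤ ‖f‖ :=
  (pi_norm_le_iff_of_nonneg (norm_nonneg f)).2 fun i =>
    abs_sum_mul_le_of_sum_eq_one (fun j => hP.1 i j) (sum_row_of_mem_rowStochastic hP i)
      fun j => norm_le_pi_norm f j

/-- The resolvent `(1 - γ P)⁻¹ f`. -/
noncomputable def discountedSum (γ : ℝ) (P : Matrix n n ℝ) (f : n → ℝ) : n → ℝ :=
  ∑' t : ℕ, γ ^ t • (P ^ t *ᵥ f)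

theorem hasSum_discountedSum (hP : P ∈ rowStochastic ℝ n) (hγ : |γ| < 1) (f : n → ℝ) :
    HasSum (fun t : ℕ => γ ^ t • (P ^ t *ᵥ f)) (discountedSum γ P f) := by
  refine (Summable.of_norm_bounded
    ((summable_geometric_of_lt_one (abs_nonneg γ) hγ).mul_right ‖f‖) fun t => ?_).hasSum
  rw [norm_smul, Real.norm_eq_abs, abs_pow]
  exact mul_le_mul_of_nonneg_left (norm_mulVec_le_of_mem_rowStochastic (pow_mem hP t) f)
    (by positivity)

theorem discountedSum_eq_add (hP : P ∈ rowStochastic ℝ n) (hγ : |γ| < 1) (f : n → ℝ) :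
    discountedSum γ P f = f + γ • P *ᵥ discountedSum γ P f := by
  have h := hasSum_discountedSum hP hγ f
  have hshift : HasSum (fun t : ℕ => γ ^ (t + 1) • (P ^ (t + 1) *ᵥ f))
      (γ • P *ᵥ discountedSum γ P f) := by
    convert (h.matrix_mulVec P).const_smul γ using 2 with t
    rw [mulVec_smul, mulVec_mulVec, smul_smul, pow_succ', pow_succ']
  simpa using h.unique hshift.zero_add

theorem eq_zero_of_eq_smul_mulVec (hP : P ∈ rowStochastic ℝ n) (hγ : |γ| < 1) {x : n → ℝ}
    (hx : x = γ • P *ᵥ x) : x = 0 := by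
  have h : ‖x‖ ≤ |γ| * ‖x‖ :=
    calc ‖x‖ = ‖γ • P *ᵥ x‖ := congrArg norm hx
      _ ≤ |γ| * ‖x‖ := by
        rw [norm_smul, Real.norm_eq_abs]
        exact mul_le_mul_of_nonneg_left (norm_mulVec_le_of_mem_rowStochastic hP x) (abs_nonneg γ)
  exact norm_le_zero_iff.1 (by nlinarith [norm_nonneg x])

theorem eq_discountedSum_of_eq_add (hP : P ∈ rowStochastic ℝ n) (hγ : |γ| < 1)
    {f x : n → ℝ} (hx : x = f + γ • P *ᵥ x) : x = discountedSum γ P f := by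
  rw [← sub_eq_zero]
  refine eq_zero_of_eq_smul_mulVec hP hγ ?_
  conv_lhs => rw [hx, discountedSum_eq_add hP hγ f]
  rw [mulVec_sub, smul_sub]
  abel

end DiscountedSum

section MDP

variable {S A : Type} [Fintype S] [Fintype A]
variable {p : A → S → S → ℝ} {r : S → A → ℝ} {γ : ℝ} {π π' : S → A → ℝ}

noncomputable def transitionMatrix (p : A → S → S → ℝ) (π : S → A → ℝ) : Matrix S S ℝ :=
  Matrix.of fun s s' => ∑ a, π s a * p a s s'

noncomputable def expectedReward (r : S → A → ℝ) (π : S → A → ℝ) : S → ℝ :=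
  fun s => ∑ a, π s a * r s a

theorem transitionMatrix_mulVec_apply (x : S → ℝ) (s : S) :
    (transitionMatrix p π *ᵥ x) s = ∑ a, π s a * (p a s ⬝ᵥ x) := by
  simp only [mulVec, dotProduct, transitionMatrix, of_apply, sum_mul, mul_sum, mul_assoc]
  exact sum_comm

variable [DecidableEq S]

theorem transitionMatrix_mem_rowStochastic (hp : IsKernel p) (hπ : IsPolicy π) :
    transitionMatrix p π ∈ rowStochastic ℝ S := by
  refine mem_rowStochastic_iff_sum.2
    ⟨fun s s' => sum_nonneg fun a _ => mul_nonneg ((hπ s).1 a) ((hp a s).1 s'), fun s => ?_⟩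
  simp only [transitionMatrix, of_apply]
  rw [sum_comm]
  simp only [← mul_sum, (hp _ s).2, mul_one, (hπ s).2]

theorem visit_succ_eq_vecMul (t : ℕ) (a : A) (s : S) :
    visit p π (t + 1) a s = p a s ᵥ* transitionMatrix p π ^ t := by
  induction t with
  | zero => rw [pow_zero, vecMul_one]; rfl
  | succ t ih =>
    rw [pow_succ, ← vecMul_vecMul, ← ih]
    rfl

theorem sum_mul_visit (hπ : IsPolicy π) (t : ℕ) (s s' : S) :
    ∑ a, π s a * visit p π t a s s' = (transitionMatrix p π ^ t) s s' := by
  cases t with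
  | zero => simp only [visit, pow_zero, one_apply, ← sum_mul, (hπ s).2, one_mul, eq_comm]
  | succ t =>
    simp only [visit_succ_eq_vecMul, pow_succ', mul_apply, vecMul, dotProduct, transitionMatrix,
      of_apply, mul_sum, sum_mul, mul_assoc]
    exact sum_comm

theorem abs_visit_le_one (hp : IsKernel p) (hπ : IsPolicy π) (t : ℕ) (a : A) (s s' : S) :
    |visit p π t a s s'| ≤ 1 := by
  cases t with
  | zero => simp only [visit]; split_ifs <;> simp
  | succ t =>
    have hP := pow_mem (transitionMatrix_mem_rowStochastic hp hπ) t
    rw [visit_succ_eq_vecMul]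
    exact abs_sum_mul_le_of_sum_eq_one (hp a s).1 (hp a s).2 fun y =>
      abs_le.2 ⟨by linarith [hP.1 y s'], le_one_of_mem_rowStochastic hP⟩

theorem Qfun_eq_discountedSum (hp : IsKernel p) (hπ : IsPolicy π) (hγ : |γ| < 1)
    (a : A) (s : S) :
    Qfun p r γ π a s = r s a + γ * (p a s ⬝ᵥ
      discountedSum γ (transitionMatrix p π) (expectedReward r π)) := by
  have h := ((hasSum_discountedSum (transitionMatrix_mem_rowStochastic hp hπ) hγ
    (expectedReward r π)).dotProduct_left (p a s)).mul_left γ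
  rw [Qfun, ← h.tsum_eq]
  congr 1
  refine tsum_congr fun t => ?_
  rw [visit_succ_eq_vecMul, dotProduct_smul, dotProduct_mulVec, smul_eq_mul, pow_succ', mul_assoc]
  rfl

theorem Vfun_eq_discountedSum (hp : IsKernel p) (hπ : IsPolicy π) (hγ : |γ| < 1) :
    Vfun p r γ π = discountedSum γ (transitionMatrix p π) (expectedReward r π) := by
  funext s
  rw [discountedSum_eq_add (transitionMatrix_mem_rowStochastic hp hπ) hγ]
  simp only [Vfun, Qfun_eq_discountedSum hp hπ hγ, Pi.add_apply, Pi.smul_apply, smul_eq_mul,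
    transitionMatrix_mulVec_apply, expectedReward, mul_add, sum_add_distrib, mul_sum]
  congr 1
  exact sum_congr rfl fun a _ => by ring

theorem Qfun_eq_bellman (hp : IsKernel p) (hπ : IsPolicy π) (hγ : |γ| < 1) (a : A) (s : S) :
    Qfun p r γ π a s = r s a + γ * (p a s ⬝ᵥ Vfun p r γ π) := by
  rw [Qfun_eq_discountedSum hp hπ hγ, Vfun_eq_discountedSum hp hπ hγ]

theorem sum_mul_Adv_self (hπ : IsPolicy π) (s : S) :
    ∑ a, π s a * Adv p r γ π a s = 0 := by
  simp only [Adv, mul_sub, sum_sub_distrib, ← sum_mul, (hπ s).2, one_mul]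
  exact sub_self _

theorem sum_mul_Adv (hp : IsKernel p) (hπ : IsPolicy π) (hπ' : IsPolicy π') (hγ : |γ| < 1) :
    (fun s => ∑ a, π' s a * Adv p r γ π a s) = expectedReward r π' +
      γ • transitionMatrix p π' *ᵥ Vfun p r γ π - Vfun p r γ π := by
  funext s
  simp only [Adv, Qfun_eq_bellman hp hπ hγ, Pi.add_apply, Pi.sub_apply, Pi.smul_apply,
    smul_eq_mul, transitionMatrix_mulVec_apply, expectedReward, mul_sub, mul_add, sum_sub_distrib,
    sum_add_distrib, ← sum_mul, (hπ' s).2, one_mul, mul_sum]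
  congr 2
  exact sum_congr rfl fun a _ => by ring

theorem Vfun_sub_Vfun_eq_discountedSum (hp : IsKernel p) (hπ : IsPolicy π) (hπ' : IsPolicy π')
    (hγ : |γ| < 1) :
    Vfun p r γ π' - Vfun p r γ π = discountedSum γ (transitionMatrix p π')
      (fun s => ∑ a, π' s a * Adv p r γ π a s) := by
  refine eq_discountedSum_of_eq_add (transitionMatrix_mem_rowStochastic hp hπ') hγ ?_
  conv_lhs => rw [Vfun_eq_discountedSum hp hπ' hγ, discountedSum_eq_add
    (transitionMatrix_mem_rowStochastic hp hπ') hγ, ← Vfun_eq_discountedSum hp hπ' hγ]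
  rw [sum_mul_Adv hp hπ hπ' hγ, mulVec_sub, smul_sub]
  abel

theorem hasSum_dvisit (hp : IsKernel p) (hπ : IsPolicy π) (hγ : |γ| < 1) (a : A) (s s' : S) :
    HasSum (fun t => (1 - γ) * (γ ^ t * visit p π t a s s')) (dvisit p γ π s' a s) := by
  refine ((Summable.of_norm_bounded (summable_geometric_of_lt_one (abs_nonneg γ) hγ)
    fun t => ?_).hasSum).mul_left (1 - γ)
  rw [Real.norm_eq_abs, abs_mul, abs_pow]
  exact mul_le_of_le_one_right (by positivity) (abs_visit_le_one hp hπ t a s s')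

theorem hasSum_dnu (hp : IsKernel p) (hπ : IsPolicy π) (hγ : |γ| < 1) (ν : S → ℝ) (s' : S) :
    HasSum (fun t => (1 - γ) * γ ^ t * (ν ᵥ* transitionMatrix p π ^ t) s') (dnu p γ ν π s') := by
  have h : HasSum (fun t => ∑ s, ∑ a, π s a * ν s * ((1 - γ) * (γ ^ t * visit p π t a s s')))
      (dnu p γ ν π s') :=
    hasSum_sum fun s _ => hasSum_sum fun a _ =>
      (hasSum_dvisit hp hπ hγ a s s').mul_left (π s a * ν s)
  convert h using 2 with t
  simp only [vecMul, dotProduct, ← sum_mul_visit hπ, mul_sum]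
  exact sum_congr rfl fun s _ => sum_congr rfl fun a _ => by ring

theorem sum_dnu_mul (hp : IsKernel p) (hπ : IsPolicy π) (hγ : |γ| < 1) (ν f : S → ℝ) :
    ∑ s, dnu p γ ν π s * f s =
      (1 - γ) * (ν ⬝ᵥ discountedSum γ (transitionMatrix p π) f) := by
  have h : HasSum (fun t => ∑ s, (1 - γ) * γ ^ t * (ν ᵥ* transitionMatrix p π ^ t) s * f s)
      (∑ s, dnu p γ ν π s * f s) :=
    hasSum_sum fun s _ => (hasSum_dnu hp hπ hγ ν s).mul_right (f s)
  have h' : HasSum (fun t => (1 - γ) * (ν ⬝ᵥ γ ^ t • (transitionMatrix p π ^ t *ᵥ f)))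
      ((1 - γ) * (ν ⬝ᵥ discountedSum γ (transitionMatrix p π) f)) :=
    ((hasSum_discountedSum (transitionMatrix_mem_rowStochastic hp hπ) hγ f).dotProduct_left
      ν).mul_left (1 - γ)
  refine h.unique ?_
  convert h' using 2 with t
  rw [dotProduct_smul, dotProduct_mulVec, smul_eq_mul]
  simp only [dotProduct, mul_sum]
  exact sum_congr rfl fun s _ => by ring

variable {ν : S → ℝ}

theorem sum_sum_mul_Adv_self_mul (hπ : IsPolicy π) (D : S → ℝ) :
    ∑ a, ∑ s, π s a * Adv p r γ π a s * D s = 0 := by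
  rw [sum_comm]
  simp only [← sum_mul, sum_mul_Adv_self hπ, zero_mul, sum_const_zero]

theorem eta1_eq_sum_sub_mul (hπ : IsPolicy π) :
    eta1 p r γ ν π' π = ∑ a, ∑ s, (π' s a - π s a) * Adv p r γ π a s * dnu p γ ν π s := by
  simp only [sub_mul, sum_sub_distrib, sum_sum_mul_Adv_self_mul hπ, sub_zero]
  rfl

theorem eta1_add_eta2 (hπ : IsPolicy π) :
    eta1 p r γ ν π' π + eta2 p r γ ν π' π =
      ∑ s, dnu p γ ν π' s * ∑ a, π' s a * Adv p r γ π a s := by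
  calc eta1 p r γ ν π' π + eta2 p r γ ν π' π
      = ∑ a, ∑ s, (π' s a * Adv p r γ π a s * dnu p γ ν π' s
          - π s a * Adv p r γ π a s * dnu p γ ν π' s
          + π s a * Adv p r γ π a s * dnu p γ ν π s) := by
        simp only [eta1, eta2, ← sum_add_distrib]
        exact sum_congr rfl fun a _ => sum_congr rfl fun s _ => by ring
    _ = ∑ s, dnu p γ ν π' s * ∑ a, π' s a * Adv p r γ π a s := by
        simp only [sum_add_distrib, sum_sub_distrib, sum_sum_mul_Adv_self_mul hπ, sub_zero,
          add_zero, mul_sum]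
        rw [sum_comm]
        exact sum_congr rfl fun s _ => sum_congr rfl fun a _ => by ring

end MDP

theorem first_second_order_decomposition_general {S A : Type} [Fintype S] [Fintype A] [DecidableEq S]
    (p : A → S → S → ℝ) (r : S → A → ℝ) (γ : ℝ) (ν : S → ℝ)
    (hp : IsKernel p)
    (hγ0 : 0 ≤ γ) (hγ1 : γ < 1)
    (πnew πold : S → A → ℝ) (hnew : IsPolicy πnew) (hold : IsPolicy πold) :
    (1 - γ) * (IntV p r γ ν πnew - IntV p r γ ν πold) =
      eta1 p r γ ν πnew πold + eta2 p r γ ν πnew πold ∧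
    eta1 p r γ ν πnew πold =
      ∑ a : A, ∑ s : S, (πnew s a - πold s a) * Adv p r γ πold a s * dnu p γ ν πold s := by
  have hγ : |γ| < 1 := abs_lt.2 ⟨by linarith, hγ1⟩
  refine ⟨?_, eta1_eq_sum_sub_mul hold⟩
  rw [eta1_add_eta2 hold, sum_dnu_mul hp hnew hγ,
    ← Vfun_sub_Vfun_eq_discountedSum hp hold hnew hγ, dotProduct_sub]
  rfl

theorem first_second_order_decomposition {S A : Type} [Fintype S] [Fintype A] [DecidableEq S] [DecidableEq A]
    [Nonempty S] [Nonempty A]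
    (p : A → S → S → ℝ) (r : S → A → ℝ) (γ : ℝ) (ν : S → ℝ) (Rmax : ℝ)
    (hp : IsKernel p) (hr : ∀ s a, |r s a| ≤ Rmax)
    (hγ0 : 0 ≤ γ) (hγ1 : γ < 1) (hν : IsPMF ν)
    (πnew πold : S → A → ℝ) (hnew : IsPolicy πnew) (hold : IsPolicy πold) :
    (1 - γ) * (IntV p r γ ν πnew - IntV p r γ ν πold) =
      eta1 p r γ ν πnew πold + eta2 p r γ ν πnew πold ∧
    eta1 p r γ ν πnew πold =
      ∑ a : A, ∑ s : S, (πnew s a - πold s a) * Adv p r γ πold a s * dnu p γ ν πold s :=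
  first_second_order_decomposition_general p r γ ν hp hγ0 hγ1 πnew πold hnew hold

end VEPO
end

section
/- Lemma 1 (Kullback–Leibler bound on the higher-order remainder): suppose there exists C > 0 such that ν(s) ≥ C for all s ∈ S. Then there exists a constant c* > 0, depending only on γ, R_max and C, such that for all policies π_old, π_new: |η₂(π_new, π_old)| ≤ (c* γ/(1−γ)) · Σ_{s∈S} d^{π_old,ν}(s) D_KL(π_old(·|s), π_new(·|s)). -/
/-!
Let `δ` bound the `ℓ¹` distance between `πnew(·|s)` and `πold(·|s)` uniformly in `s`. One step
of the state chain moves the two marginal laws apart by at most `δ` in `ℓ¹`, so after `t` steps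
they differ by at most `tδ`, and discounting gives `‖d^{πnew,ν} - d^{πold,ν}‖₁ ≤ γδ/(1-γ)`.
Together with `|A^π| ≤ 2R_max/(1-γ)` this makes `η₂` quadratic in `δ`. Choosing `δ` as twice the
largest total variation distance, attained at some state `s₀`, the Pinsker-type bound
`D_TV² ≤ H² ≤ D_KL` (with `H` the Hellinger distance) controls `δ²` by the KL term at `s₀`, whose
weight `d^{πold,ν}(s₀) ≥ (1-γ)ν(s₀) ≥ (1-γ)C` is bounded below.
-/

theorem EReal.coe_finset_sum {ι : Type*} (s : Finset ι) (f : ι → ℝ) :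
    ((∑ i ∈ s, f i : ℝ) : EReal) = ∑ i ∈ s, (f i : EReal) :=
  map_sum (⟨⟨(↑), EReal.coe_zero⟩, EReal.coe_add⟩ : ℝ →+ EReal) f s

namespace VEPO

section PMF

variable {X Y : Type} [Fintype X] [Fintype Y]

theorem IsPMF.le_one {μ : X → ℝ} (hμ : IsPMF μ) (x : X) : μ x ≤ 1 :=
  hμ.2 ▸ Finset.single_le_sum (fun y _ => hμ.1 y) (Finset.mem_univ x)

theorem IsPMF.abs_sum_mul_le {w f : X → ℝ} {B : ℝ} (hw : IsPMF w) (hf : ∀ x, |f x| ≤ B) :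
    |∑ x, w x * f x| ≤ B :=
  calc |∑ x, w x * f x| ≤ ∑ x, w x * B := by
        refine (Finset.abs_sum_le_sum_abs _ _).trans (Finset.sum_le_sum fun x _ => ?_)
        rw [abs_mul, abs_of_nonneg (hw.1 x)]
        exact mul_le_mul_of_nonneg_left (hf x) (hw.1 x)
    _ = B := by rw [← Finset.sum_mul, hw.2, one_mul]

theorem IsPMF.sum_mul_kernel {μ : X → ℝ} {K : X → Y → ℝ} (hμ : IsPMF μ)
    (hK : ∀ x, IsPMF (K x)) : IsPMF fun y => ∑ x, μ x * K x y := by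
  refine ⟨fun y => Finset.sum_nonneg fun x _ => mul_nonneg (hμ.1 x) ((hK x).1 y), ?_⟩
  rw [Finset.sum_comm]
  simp only [← Finset.mul_sum, (hK _).2, mul_one, hμ.2]

theorem sum_abs_sum_mul_kernel_le {f : X → ℝ} {K : X → Y → ℝ} (hK : ∀ x, IsPMF (K x)) :
    ∑ y, |∑ x, f x * K x y| ≤ ∑ x, |f x| :=
  calc ∑ y, |∑ x, f x * K x y| ≤ ∑ y, ∑ x, |f x| * K x y := by
        refine Finset.sum_le_sum fun y _ => (Finset.abs_sum_le_sum_abs _ _).trans_eq ?_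
        simp only [abs_mul, abs_of_nonneg ((hK _).1 y)]
    _ = ∑ x, |f x| := by
        rw [Finset.sum_comm]
        simp only [← Finset.mul_sum, (hK _).2, mul_one]

theorem sum_abs_sub_sum_mul_kernel_le {μ μ' : X → ℝ} {K K' : X → Y → ℝ} {δ : ℝ}
    (hμ' : IsPMF μ') (hK : ∀ x, IsPMF (K x)) (hKK' : ∀ x, ∑ y, |K x y - K' x y| ≤ δ) :
    ∑ y, |∑ x, μ x * K x y - ∑ x, μ' x * K' x y| ≤ ∑ x, |μ x - μ' x| + δ := by
  have hsplit : ∀ y, ∑ x, μ x * K x y - ∑ x, μ' x * K' x y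
      = ∑ x, (μ x - μ' x) * K x y + ∑ x, μ' x * (K x y - K' x y) := fun y => by
    rw [← Finset.sum_sub_distrib, ← Finset.sum_add_distrib]
    exact Finset.sum_congr rfl fun x _ => by ring
  have hpert : ∑ y, |∑ x, μ' x * (K x y - K' x y)| ≤ δ :=
    calc ∑ y, |∑ x, μ' x * (K x y - K' x y)| ≤ ∑ y, ∑ x, μ' x * |K x y - K' x y| := by
          refine Finset.sum_le_sum fun y _ => (Finset.abs_sum_le_sum_abs _ _).trans_eq ?_
          simp only [abs_mul, abs_of_nonneg (hμ'.1 _)]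
      _ ≤ ∑ x, μ' x * δ := by
          rw [Finset.sum_comm]
          simp only [← Finset.mul_sum]
          exact Finset.sum_le_sum fun x _ => mul_le_mul_of_nonneg_left (hKK' x) (hμ'.1 x)
      _ = δ := by rw [← Finset.sum_mul, hμ'.2, one_mul]
  calc ∑ y, |∑ x, μ x * K x y - ∑ x, μ' x * K' x y|
      ≤ ∑ y, (|∑ x, (μ x - μ' x) * K x y| + |∑ x, μ' x * (K x y - K' x y)|) :=
        Finset.sum_le_sum fun y _ => hsplit y ▸ abs_add_le _ _
    _ ≤ ∑ x, |μ x - μ' x| + δ := by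
        rw [Finset.sum_add_distrib]
        exact add_le_add (sum_abs_sum_mul_kernel_le hK) hpert

theorem sum_abs_le_of_hasSum {f : ℕ → X → ℝ} {a : X → ℝ} {g : ℕ → ℝ} {b : ℝ}
    (hf : ∀ x, HasSum (f · x) (a x)) (hg : HasSum g b) (hfg : ∀ t, ∑ x, |f t x| ≤ g t) :
    ∑ x, |a x| ≤ b := by
  have hsign : HasSum (fun t => ∑ x, SignType.sign (a x) * f t x) (∑ x, |a x|) := by
    simpa only [sign_mul_self] using hasSum_sum fun x _ => (hf x).mul_left (SignType.sign (a x) : ℝ)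
  refine hasSum_le (fun t => (Finset.sum_le_sum fun x _ => ?_).trans (hfg t)) hsign hg
  rcases lt_trichotomy (a x) 0 with h | h | h <;> simp [h, neg_le_abs, le_abs_self]

end PMF

section Pinsker

variable {X : Type} [Fintype X]

/-- The squared Hellinger distance, without the customary factor `1/2`. -/
noncomputable def hellingerSq (μ₁ μ₂ : X → ℝ) : ℝ :=
  ∑ x, (Real.sqrt (μ₁ x) - Real.sqrt (μ₂ x)) ^ 2

theorem DTV_sq_le_hellingerSq {μ₁ μ₂ : X → ℝ} (h₁ : IsPMF μ₁) (h₂ : IsPMF μ₂) :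
    DTV μ₁ μ₂ ^ 2 ≤ hellingerSq μ₁ μ₂ := by
  have hfactor : ∀ x, |μ₁ x - μ₂ x| =
      |Real.sqrt (μ₁ x) - Real.sqrt (μ₂ x)| * (Real.sqrt (μ₁ x) + Real.sqrt (μ₂ x)) := fun x => by
    rw [← abs_of_nonneg (by positivity : 0 ≤ Real.sqrt (μ₁ x) + Real.sqrt (μ₂ x)), ← abs_mul]
    congr 1
    linear_combination Real.sq_sqrt (h₂.1 x) - Real.sq_sqrt (h₁.1 x)
  have hsum : ∑ x, (Real.sqrt (μ₁ x) + Real.sqrt (μ₂ x)) ^ 2 ≤ 4 :=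
    calc ∑ x, (Real.sqrt (μ₁ x) + Real.sqrt (μ₂ x)) ^ 2 ≤ ∑ x, (2 * μ₁ x + 2 * μ₂ x) :=
          Finset.sum_le_sum fun x _ => by
            nlinarith [sq_nonneg (Real.sqrt (μ₁ x) - Real.sqrt (μ₂ x)),
              Real.sq_sqrt (h₁.1 x), Real.sq_sqrt (h₂.1 x)]
      _ = 4 := by
          rw [Finset.sum_add_distrib, ← Finset.mul_sum, ← Finset.mul_sum, h₁.2, h₂.2]
          norm_num
  have hCS := Finset.sum_mul_sq_le_sq_mul_sq Finset.univ
    (fun x => |Real.sqrt (μ₁ x) - Real.sqrt (μ₂ x)|) (fun x => Real.sqrt (μ₁ x) + Real.sqrt (μ₂ x))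
  simp only [← hfactor, sq_abs] at hCS
  have hH : 0 ≤ hellingerSq μ₁ μ₂ := Finset.sum_nonneg fun x _ => sq_nonneg _
  calc DTV μ₁ μ₂ ^ 2 = (∑ x, |μ₁ x - μ₂ x|) ^ 2 / 4 := by rw [DTV]; ring
    _ ≤ hellingerSq μ₁ μ₂ * (∑ x, (Real.sqrt (μ₁ x) + Real.sqrt (μ₂ x)) ^ 2) / 4 := by
        gcongr
        exact hCS
    _ ≤ hellingerSq μ₁ μ₂ * 4 / 4 := by gcongr
    _ = hellingerSq μ₁ μ₂ := by ring

theorem sqrt_sub_sqrt_sq_add_sub_le_mul_log_div {x y : ℝ} (hx : 0 ≤ x) (hy : 0 < y) :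
    (Real.sqrt x - Real.sqrt y) ^ 2 + (x - y) ≤ x * Real.log (x / y) := by
  rcases hx.eq_or_lt with rfl | hx
  · simp [Real.sq_sqrt hy.le]
  have ha := Real.sqrt_pos.2 hx
  have hb := Real.sqrt_pos.2 hy
  have hlog : Real.log (x / y) = 2 * Real.log (Real.sqrt x / Real.sqrt y) := by
    have hsq : x / y = (Real.sqrt x / Real.sqrt y) ^ 2 := by
      rw [div_pow, Real.sq_sqrt hx.le, Real.sq_sqrt hy.le]
    rw [hsq, Real.log_pow, Nat.cast_ofNat]
  have hineq := Real.one_sub_inv_le_log_of_pos (div_pos ha hb)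
  rw [inv_div] at hineq
  have hx' := Real.sq_sqrt hx.le
  have hy' := Real.sq_sqrt hy.le
  calc (Real.sqrt x - Real.sqrt y) ^ 2 + (x - y)
      = 2 * x * (1 - Real.sqrt y / Real.sqrt x) := by
        field_simp
        linear_combination (Real.sqrt x - 2 * Real.sqrt y) * hx' + Real.sqrt x * hy'
    _ ≤ 2 * x * Real.log (Real.sqrt x / Real.sqrt y) := by gcongr
    _ = x * Real.log (x / y) := by rw [hlog]; ring

theorem hellingerSq_le_DKL {μ₁ μ₂ : X → ℝ} (h₁ : IsPMF μ₁) (h₂ : IsPMF μ₂) :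
    (hellingerSq μ₁ μ₂ : EReal) ≤ DKL μ₁ μ₂ := by
  have hshift : hellingerSq μ₁ μ₂ =
      ∑ x, ((Real.sqrt (μ₁ x) - Real.sqrt (μ₂ x)) ^ 2 + (μ₁ x - μ₂ x)) := by
    rw [Finset.sum_add_distrib, Finset.sum_sub_distrib, h₁.2, h₂.2, sub_self, add_zero]
    rfl
  rw [hshift, EReal.coe_finset_sum]
  refine Finset.sum_le_sum fun x _ => ?_
  split_ifs with hx hy
  · rw [hx, Real.sqrt_zero, zero_sub, neg_sq, Real.sq_sqrt (h₂.1 x)]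
    simp
  · exact le_top
  · exact EReal.coe_le_coe_iff.2 <|
      sqrt_sub_sqrt_sq_add_sub_le_mul_log_div (h₁.1 x) ((h₂.1 x).lt_of_ne' hy)

theorem DTV_sq_le_DKL {μ₁ μ₂ : X → ℝ} (h₁ : IsPMF μ₁) (h₂ : IsPMF μ₂) :
    ((DTV μ₁ μ₂ ^ 2 : ℝ) : EReal) ≤ DKL μ₁ μ₂ :=
  (EReal.coe_le_coe_iff.2 (DTV_sq_le_hellingerSq h₁ h₂)).trans (hellingerSq_le_DKL h₁ h₂)

end Pinsker

section MDP

variable {S A : Type} [Fintype S] [Fintype A] {p : A → S → S → ℝ} {π π₁ π₂ : S → A → ℝ}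
  {ν : S → ℝ} {γ δ : ℝ}

def policyKernel (p : A → S → S → ℝ) (π : S → A → ℝ) (s s' : S) : ℝ :=
  ∑ a, π s a * p a s s'

theorem isPMF_policyKernel (hp : IsKernel p) (hπ : IsPolicy π) (s : S) :
    IsPMF (policyKernel p π s) :=
  (hπ s).sum_mul_kernel (hp · s)

theorem sum_abs_sub_policyKernel_le (hp : IsKernel p) (s : S) :
    ∑ s', |policyKernel p π₁ s s' - policyKernel p π₂ s s'| ≤ ∑ a, |π₁ s a - π₂ s a| := by
  simp only [policyKernel, ← Finset.sum_sub_distrib, ← sub_mul]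
  exact sum_abs_sum_mul_kernel_le (hp · s)

theorem isPMF_visit [DecidableEq S] (hp : IsKernel p) (hπ : IsPolicy π) :
    ∀ t a s, IsPMF (visit p π t a s)
  | 0, _, s => ⟨fun s' => by unfold visit; split_ifs <;> norm_num, by simp [visit]⟩
  | 1, a, s => hp a s
  | t + 2, a, s => (isPMF_visit hp hπ (t + 1) a s).sum_mul_kernel (isPMF_policyKernel hp hπ)

theorem isPMF_marg (hp : IsKernel p) (hπ : IsPolicy π) (hν : IsPMF ν) :
    ∀ t, IsPMF (marg p π ν t)
  | 0 => hν
  | t + 1 => (isPMF_marg hp hπ hν t).sum_mul_kernel (isPMF_policyKernel hp hπ)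

theorem sum_abs_sub_marg_le (hp : IsKernel p) (h₁ : IsPolicy π₁) (h₂ : IsPolicy π₂)
    (hν : IsPMF ν) (hδ : ∀ s, ∑ a, |π₁ s a - π₂ s a| ≤ δ) :
    ∀ t : ℕ, ∑ s, |marg p π₁ ν t s - marg p π₂ ν t s| ≤ t * δ
  | 0 => by simp [marg]
  | t + 1 =>
    calc ∑ s, |marg p π₁ ν (t + 1) s - marg p π₂ ν (t + 1) s|
        ≤ ∑ s, |marg p π₁ ν t s - marg p π₂ ν t s| + δ :=
          sum_abs_sub_sum_mul_kernel_le (isPMF_marg hp h₂ hν t) (isPMF_policyKernel hp h₁)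
            fun s => (sum_abs_sub_policyKernel_le hp s).trans (hδ s)
      _ ≤ t * δ + δ := by gcongr; exact sum_abs_sub_marg_le hp h₁ h₂ hν hδ t
      _ = (t + 1 : ℕ) * δ := by push_cast; ring

theorem sum_visit_eq_marg [DecidableEq S] (hπ : IsPolicy π) :
    ∀ t s', ∑ s, ∑ a, π s a * ν s * visit p π t a s s' = marg p π ν t s'
  | 0, s' => by simp [visit, marg, ← Finset.sum_mul, (hπ _).2]
  | 1, s' => Finset.sum_congr rfl fun s _ => by
      simp only [visit, marg, Finset.mul_sum]
      exact Finset.sum_congr rfl fun a _ => by ring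
  | t + 2, s' => by
      have hstep : ∀ a s, visit p π (t + 2) a s s' =
          ∑ s'', visit p π (t + 1) a s s'' * policyKernel p π s'' s' := fun _ _ => rfl
      rw [show marg p π ν (t + 2) s' = ∑ s'', marg p π ν (t + 1) s'' * policyKernel p π s'' s'
        from rfl]
      simp only [hstep, ← sum_visit_eq_marg hπ (t + 1), Finset.mul_sum, Finset.sum_mul, mul_assoc]
      symm
      rw [Finset.sum_comm]
      exact Finset.sum_congr rfl fun _ _ => Finset.sum_comm

theorem hasSum_marg [DecidableEq S] (hγ0 : 0 ≤ γ) (hγ1 : γ < 1) (hp : IsKernel p)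
    (hπ : IsPolicy π) (s' : S) :
    HasSum (fun t => (1 - γ) * γ ^ t * marg p π ν t s') (dnu p γ ν π s') := by
  have hvisit : ∀ s a, HasSum (fun t => π s a * ν s * ((1 - γ) * (γ ^ t * visit p π t a s s')))
      (π s a * ν s * dvisit p γ π s' a s) := fun s a => by
    refine ((Summable.hasSum ?_).mul_left _).mul_left _
    refine (summable_geometric_of_lt_one hγ0 hγ1).of_nonneg_of_le
      (fun t => mul_nonneg (pow_nonneg hγ0 t) ((isPMF_visit hp hπ t a s).1 s')) fun t => ?_
    exact mul_le_of_le_one_right (pow_nonneg hγ0 t) ((isPMF_visit hp hπ t a s).le_one s')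
  convert hasSum_sum fun s _ => hasSum_sum fun a _ => hvisit s a using 1
  · funext t
    rw [← sum_visit_eq_marg hπ t s', Finset.mul_sum]
    refine Finset.sum_congr rfl fun s _ => ?_
    rw [Finset.mul_sum]
    exact Finset.sum_congr rfl fun a _ => by ring
  · rfl

theorem one_sub_mul_le_dnu [DecidableEq S] (hγ0 : 0 ≤ γ) (hγ1 : γ < 1) (hp : IsKernel p)
    (hπ : IsPolicy π) (hν : IsPMF ν) (s : S) : (1 - γ) * ν s ≤ dnu p γ ν π s := by
  simpa [marg] using le_hasSum (hasSum_marg hγ0 hγ1 hp hπ s) 0 fun t _ =>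
    mul_nonneg (mul_nonneg (by linarith) (pow_nonneg hγ0 t)) ((isPMF_marg hp hπ hν t).1 s)

theorem sum_abs_sub_dnu_le [DecidableEq S] (hγ0 : 0 ≤ γ) (hγ1 : γ < 1) (hp : IsKernel p)
    (h₁ : IsPolicy π₁) (h₂ : IsPolicy π₂) (hν : IsPMF ν)
    (hδ : ∀ s, ∑ a, |π₁ s a - π₂ s a| ≤ δ) :
    ∑ s, |dnu p γ ν π₁ s - dnu p γ ν π₂ s| ≤ γ * δ / (1 - γ) := by
  have h1γ : 0 < 1 - γ := by linarith
  have hgeom : HasSum (fun t : ℕ => (1 - γ) * δ * (t * γ ^ t)) (γ * δ / (1 - γ)) := by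
    have h := (hasSum_coe_mul_geometric_of_norm_lt_one
      (by rwa [Real.norm_of_nonneg hγ0] : ‖γ‖ < 1)).mul_left ((1 - γ) * δ)
    rwa [show (1 - γ) * δ * (γ / (1 - γ) ^ 2) = γ * δ / (1 - γ) by field_simp] at h
  refine sum_abs_le_of_hasSum (fun s => (hasSum_marg hγ0 hγ1 hp h₁ s).sub
    (hasSum_marg hγ0 hγ1 hp h₂ s)) hgeom fun t => ?_
  simp only [← mul_sub, abs_mul, abs_of_pos h1γ, abs_of_nonneg (pow_nonneg hγ0 t),
    ← Finset.mul_sum]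
  calc (1 - γ) * γ ^ t * ∑ s, |marg p π₁ ν t s - marg p π₂ ν t s|
      ≤ (1 - γ) * γ ^ t * (t * δ) := by
        gcongr; exact sum_abs_sub_marg_le hp h₁ h₂ hν hδ t
    _ = (1 - γ) * δ * (t * γ ^ t) := by ring

theorem abs_Qfun_le [DecidableEq S] {r : S → A → ℝ} {Rmax : ℝ} (hγ0 : 0 ≤ γ) (hγ1 : γ < 1)
    (hp : IsKernel p) (hπ : IsPolicy π) (hr : ∀ s a, |r s a| ≤ Rmax) (a : A) (s : S) :
    |Qfun p r γ π a s| ≤ Rmax / (1 - γ) := by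
  have hterm : ∀ t, ‖γ ^ (t + 1) *
      ∑ s', visit p π (t + 1) a s s' * ∑ a', π s' a' * r s' a'‖ ≤ γ * Rmax * γ ^ t := fun t => by
    rw [Real.norm_eq_abs, abs_mul, abs_of_nonneg (pow_nonneg hγ0 _)]
    calc γ ^ (t + 1) * |∑ s', visit p π (t + 1) a s s' * ∑ a', π s' a' * r s' a'|
        ≤ γ ^ (t + 1) * Rmax := by
          gcongr
          exact (isPMF_visit hp hπ (t + 1) a s).abs_sum_mul_le fun s' =>
            (hπ s').abs_sum_mul_le (hr s')
      _ = γ * Rmax * γ ^ t := by ring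
  have htail := tsum_of_norm_bounded
    ((hasSum_geometric_of_lt_one hγ0 hγ1).mul_left (γ * Rmax)) hterm
  rw [Real.norm_eq_abs] at htail
  have h1γ : 1 - γ ≠ 0 := by linarith
  calc |Qfun p r γ π a s| ≤ Rmax + γ * Rmax * (1 - γ)⁻¹ :=
        (abs_add_le _ _).trans (add_le_add (hr s a) htail)
    _ = Rmax / (1 - γ) := by field_simp; ring

theorem abs_Adv_le [DecidableEq S] {r : S → A → ℝ} {Rmax : ℝ} (hγ0 : 0 ≤ γ) (hγ1 : γ < 1)
    (hp : IsKernel p) (hπ : IsPolicy π) (hr : ∀ s a, |r s a| ≤ Rmax) (a : A) (s : S) :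
    |Adv p r γ π a s| ≤ 2 * Rmax / (1 - γ) :=
  calc |Adv p r γ π a s| ≤ |Qfun p r γ π a s| + |Vfun p r γ π s| := abs_sub _ _
    _ ≤ Rmax / (1 - γ) + Rmax / (1 - γ) :=
        add_le_add (abs_Qfun_le hγ0 hγ1 hp hπ hr a s)
          ((hπ s).abs_sum_mul_le fun a' => abs_Qfun_le hγ0 hγ1 hp hπ hr a' s)
    _ = 2 * Rmax / (1 - γ) := by ring

theorem abs_eta2_le [DecidableEq S] [Nonempty S] {r : S → A → ℝ} {Rmax : ℝ} (hγ0 : 0 ≤ γ)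
    (hγ1 : γ < 1) (hR : 0 ≤ Rmax) (hp : IsKernel p) (h₁ : IsPolicy π₁) (h₂ : IsPolicy π₂)
    (hr : ∀ s a, |r s a| ≤ Rmax) (hν : IsPMF ν) (hδ : ∀ s, ∑ a, |π₁ s a - π₂ s a| ≤ δ) :
    |eta2 p r γ ν π₁ π₂| ≤ 2 * Rmax * γ * δ ^ 2 / (1 - γ) ^ 2 := by
  set B := 2 * Rmax / (1 - γ)
  have hB : 0 ≤ B := div_nonneg (by positivity) (by linarith)
  have hδ0 : 0 ≤ δ := (Finset.sum_nonneg fun _ _ => abs_nonneg _).trans (hδ (Classical.arbitrary S))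
  set Δ := fun s => |dnu p γ ν π₁ s - dnu p γ ν π₂ s|
  calc |eta2 p r γ ν π₁ π₂| ≤ ∑ s, ∑ a, |π₁ s a - π₂ s a| * B * Δ s := by
        rw [eta2, Finset.sum_comm]
        refine (Finset.abs_sum_le_sum_abs _ _).trans (Finset.sum_le_sum fun s _ => ?_)
        refine (Finset.abs_sum_le_sum_abs _ _).trans (Finset.sum_le_sum fun a _ => ?_)
        rw [abs_mul, abs_mul]
        gcongr
        exact abs_Adv_le hγ0 hγ1 hp h₂ hr a s
    _ ≤ ∑ s, δ * B * Δ s := by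
        simp only [← Finset.sum_mul]
        gcongr with s
        exact hδ s
    _ ≤ δ * B * (γ * δ / (1 - γ)) := by
        rw [← Finset.mul_sum]
        gcongr
        exact sum_abs_sub_dnu_le hγ0 hγ1 hp h₁ h₂ hν hδ
    _ = 2 * Rmax * γ * δ ^ 2 / (1 - γ) ^ 2 := by
        have : 1 - γ ≠ 0 := by linarith
        simp only [B]
        field_simp

theorem coe_mul_DTV_sq_le_sum_dnu_mul_DKL [DecidableEq S] {C : ℝ} (hγ0 : 0 ≤ γ) (hγ1 : γ < 1)
    (hp : IsKernel p) (h₁ : IsPolicy π₁) (h₂ : IsPolicy π₂) (hν : IsPMF ν) (hνC : ∀ s, C ≤ ν s)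
    (s₀ : S) :
    (((1 - γ) * C * DTV (π₁ s₀) (π₂ s₀) ^ 2 : ℝ) : EReal) ≤
      ∑ s, ((dnu p γ ν π₁ s : ℝ) : EReal) * DKL (π₁ s) (π₂ s) := by
  have h1γ : 0 ≤ 1 - γ := by linarith
  have hd : ∀ s, (1 - γ) * ν s ≤ dnu p γ ν π₁ s := one_sub_mul_le_dnu hγ0 hγ1 hp h₁ hν
  have hd₀ : ∀ s, (0 : EReal) ≤ ((dnu p γ ν π₁ s : ℝ) : EReal) := fun s =>
    EReal.coe_nonneg.2 ((mul_nonneg h1γ (hν.1 s)).trans (hd s))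
  have hDKL : ∀ s, ((DTV (π₁ s) (π₂ s) ^ 2 : ℝ) : EReal) ≤ DKL (π₁ s) (π₂ s) :=
    fun s => DTV_sq_le_DKL (h₁ s) (h₂ s)
  calc (((1 - γ) * C * DTV (π₁ s₀) (π₂ s₀) ^ 2 : ℝ) : EReal)
      = (((1 - γ) * C : ℝ) : EReal) * ((DTV (π₁ s₀) (π₂ s₀) ^ 2 : ℝ) : EReal) :=
        EReal.coe_mul _ _
    _ ≤ ((dnu p γ ν π₁ s₀ : ℝ) : EReal) * DKL (π₁ s₀) (π₂ s₀) :=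
        mul_le_mul_of_nonneg' (EReal.coe_le_coe_iff.2
          ((mul_le_mul_of_nonneg_left (hνC s₀) h1γ).trans (hd s₀)))
          (hDKL s₀) (EReal.coe_nonneg.2 (sq_nonneg _)) (hd₀ s₀)
    _ ≤ _ := Finset.single_le_sum (fun s _ => mul_nonneg (hd₀ s)
          ((EReal.coe_nonneg.2 (sq_nonneg _)).trans (hDKL s))) (Finset.mem_univ s₀)

end MDP

theorem remainder_kl_bound (γ Rmax C : ℝ)
    (hγ0 : 0 ≤ γ) (hγ1 : γ < 1) (hR : 0 ≤ Rmax) (hC : 0 < C) :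
    ∃ cstar : ℝ, 0 < cstar ∧
      ∀ (S A : Type) [Fintype S] [Fintype A] [DecidableEq S] [DecidableEq A]
        [Nonempty S] [Nonempty A],
      ∀ (p : A → S → S → ℝ) (r : S → A → ℝ) (ν : S → ℝ),
        IsKernel p → (∀ s a, |r s a| ≤ Rmax) → IsPMF ν → (∀ s, C ≤ ν s) →
      ∀ (πold πnew : S → A → ℝ), IsPolicy πold → IsPolicy πnew →
        ((|eta2 p r γ ν πnew πold| : ℝ) : EReal) ≤
          ((cstar * γ / (1 - γ) : ℝ) : EReal) *
            ∑ s : S, ((dnu p γ ν πold s : ℝ) : EReal) * DKL (πold s) (πnew s) := by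
  have h1γ : 0 < 1 - γ := by linarith
  refine ⟨8 * Rmax / (C * (1 - γ) ^ 2) + 1, by positivity, ?_⟩
  intro S A _ _ _ _ _ _ p r ν hp hr hν hνC πold πnew hold hnew
  obtain ⟨s₀, -, hs₀⟩ := Finset.univ.exists_max_image (fun s => DTV (πold s) (πnew s))
    Finset.univ_nonempty
  set M := DTV (πold s₀) (πnew s₀)
  have hη : |eta2 p r γ ν πnew πold| ≤ 2 * Rmax * γ * (2 * M) ^ 2 / (1 - γ) ^ 2 :=
    abs_eta2_le hγ0 hγ1 hR hp hnew hold hr hν fun s => by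
      have h := hs₀ s (Finset.mem_univ s)
      simp only [DTV, abs_sub_comm (πold s _)] at h
      linarith
  have hreal : |eta2 p r γ ν πnew πold| ≤
      (8 * Rmax / (C * (1 - γ) ^ 2) + 1) * γ / (1 - γ) * ((1 - γ) * C * M ^ 2) := by
    have hsplit : (8 * Rmax / (C * (1 - γ) ^ 2) + 1) * γ / (1 - γ) * ((1 - γ) * C * M ^ 2)
        = 2 * Rmax * γ * (2 * M) ^ 2 / (1 - γ) ^ 2 + γ * C * M ^ 2 := by
      field_simp
      ring
    rw [hsplit]
    linarith [(by positivity : 0 ≤ γ * C * M ^ 2)]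
  calc ((|eta2 p r γ ν πnew πold| : ℝ) : EReal)
      ≤ (((8 * Rmax / (C * (1 - γ) ^ 2) + 1) * γ / (1 - γ) : ℝ) : EReal) *
          (((1 - γ) * C * M ^ 2 : ℝ) : EReal) := by
        rw [← EReal.coe_mul]; exact EReal.coe_le_coe_iff.2 hreal
    _ ≤ _ := mul_le_mul_of_nonneg_left
        (coe_mul_DTV_sq_le_sum_dnu_mul_DKL hγ0 hγ1 hp hold hnew hν hνC s₀)
        (EReal.coe_nonneg.2 (by positivity))

end VEPO
end
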